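/- arXiv:2601.01482 — 2 statements merged into one kernel-verified Lean document; each statement's English description precedes it below -/
import Mathlib

section
/- Let H be a connected graph whose adjacency matrix has no eigenvalues in the open interval (-1,1). If H has a vertex of degree 1, then H is isomorphic to the single-edge graph K_2. -/
/-!
If no eigenvalue of the adjacency matrix `A` lies in `(-1, 1)`, then `A² - 1` is positive
semidefinite. At a pendant vertex `v` with neighbour `u` its diagonal entry is `deg v - 1 = 0`,
so the whole row `v` of `A² - 1` vanishes; as `(A²)_{vw} = A_{uw}`, this says that `v` is the only
neighbour of `u`. Hence `{u, v}` is closed under adjacency, so it is all of the connected graph.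
-/

open scoped Matrix MatrixOrder ComplexOrder

namespace Matrix

variable {n 𝕜 : Type*} [RCLike 𝕜] [Fintype n] [DecidableEq n] {A M : Matrix n n 𝕜}

theorem IsHermitian.posSemidef_mul_self_sub_one (hA : A.IsHermitian)
    (h : ∀ μ ∈ spectrum ℝ A, 1 ≤ |μ|) : (A * A - 1).PosSemidef := by
  have hcfc : A * A - 1 = cfc (fun x : ℝ => x * x - 1) A := by
    rw [cfc_sub .., cfc_mul .., cfc_id' .., cfc_const_one ..]
  rw [← nonneg_iff_posSemidef, hcfc]
  refine cfc_nonneg fun μ hμ => ?_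
  nlinarith [h μ hμ, abs_mul_abs_self μ]

theorem PosSemidef.apply_eq_zero_of_apply_self_eq_zero (hM : M.PosSemidef) {i : n}
    (hi : M i i = 0) (j : n) : M i j = 0 := by
  have hcol : M *ᵥ Pi.single i 1 = 0 := by
    rw [← hM.dotProduct_mulVec_zero_iff]
    simp [hi]
  rw [← hM.isHermitian.apply, ← col_apply M i j, ← mulVec_single_one, hcol]
  simp

end Matrix

namespace SimpleGraph

variable {V : Type*} {G : SimpleGraph V} {u v : V}

theorem Reachable.mem_of_adj_closed {s : Set V} (hs : ∀ ⦃a b⦄, G.Adj a b → a ∈ s → b ∈ s)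
    (h : G.Reachable u v) (hu : u ∈ s) : v ∈ s := by
  rw [reachable_iff_reflTransGen] at h
  induction h with
  | refl => exact hu
  | tail _ hbc ih => exact hs hbc ih

theorem Preconnected.eq_or_eq_of_neighborSet_eq (hG : G.Preconnected) (hu : G.neighborSet u = {v})
    (hv : G.neighborSet v = {u}) (w : V) : w = u ∨ w = v := by
  refine (hG u w).mem_of_adj_closed (s := {u, v}) (fun a b hab ha => ?_) (Set.mem_insert u _)
  rcases ha with rfl | rfl
  · exact Or.inr ((Set.ext_iff.mp hu b).mp hab)
  · exact Or.inl ((Set.ext_iff.mp hv b).mp hab)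

theorem nonempty_iso_top_fin_two [Fintype V] (huv : G.Adj u v) (h : ∀ w, w = u ∨ w = v) :
    Nonempty (G ≃g (⊤ : SimpleGraph (Fin 2))) := by
  classical
  have htop : G = ⊤ := by
    ext a b
    rcases h a with rfl | rfl <;> rcases h b with rfl | rfl <;>
      simp [huv, huv.symm, huv.ne, huv.ne.symm]
  have hcard : Fintype.card V = 2 := by
    rw [← Finset.card_univ, show (Finset.univ : Finset V) = {u, v} by ext w; simpa using h w,
      Finset.card_pair huv.ne]
  subst htop
  exact ⟨Iso.completeGraph (Fintype.equivFinOfCardEq hcard)⟩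

variable [Fintype V] [DecidableEq V] [DecidableRel G.Adj] {𝕜 : Type*} [RCLike 𝕜]

theorem neighborSet_eq_singleton_of_posSemidef
    (hG : (G.adjMatrix 𝕜 * G.adjMatrix 𝕜 - 1).PosSemidef) (hv : G.neighborSet v = {u}) :
    G.neighborSet u = {v} := by
  have hvf : G.neighborFinset v = {u} := by
    rw [← Finset.coe_inj, coe_neighborFinset, hv, Finset.coe_singleton]
  have hdeg : G.degree v = 1 := by rw [← card_neighborFinset_eq_degree, hvf, Finset.card_singleton]
  have hdiag : (G.adjMatrix 𝕜 * G.adjMatrix 𝕜 - 1) v v = 0 := by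
    rw [Matrix.sub_apply, adjMatrix_mul_self_apply_self, hdeg, Matrix.one_apply_eq, Nat.cast_one,
      sub_self]
  ext w
  have := hG.apply_eq_zero_of_apply_self_eq_zero hdiag w
  rw [Matrix.sub_apply, adjMatrix_mul_apply, hvf, Finset.sum_singleton, sub_eq_zero,
    Matrix.one_apply, adjMatrix_apply] at this
  rw [mem_neighborSet, Set.mem_singleton_iff, eq_comm]
  split_ifs at this <;> simp_all

end SimpleGraph

theorem stmt0_general {V : Type*} [Fintype V]
    (H : SimpleGraph V) [DecidableRel H.Adj]
    (hconn : H.Connected)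
    (hspec : ∀ μ : ℝ, Module.End.HasEigenvalue (H.adjMatrix ℝ).mulVecLin μ →
      μ ∉ Set.Ioo (-1 : ℝ) 1)
    (hdeg : ∃ v, H.degree v = 1) :
    Nonempty (H ≃g (⊤ : SimpleGraph (Fin 2))) := by
  classical
  obtain ⟨v, hv⟩ := hdeg
  obtain ⟨u, hvuf⟩ := Finset.card_eq_one.mp hv
  have hvu : H.neighborSet v = {u} := by
    rw [← H.coe_neighborFinset, hvuf, Finset.coe_singleton]
  have hpsd : (H.adjMatrix ℝ * H.adjMatrix ℝ - 1).PosSemidef := by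
    refine (H.isHermitian_adjMatrix ℝ).posSemidef_mul_self_sub_one fun μ hμ => ?_
    rw [← Matrix.spectrum_toLin', ← Module.End.hasEigenvalue_iff_mem_spectrum,
      Matrix.toLin'_apply'] at hμ
    have := hspec μ hμ
    rw [Set.mem_Ioo, not_and_or, not_lt, not_lt] at this
    exact le_abs'.mpr this
  have huv := H.neighborSet_eq_singleton_of_posSemidef hpsd hvu
  have hadj : H.Adj v u := by rw [← H.mem_neighborSet, hvu]; rfl
  exact H.nonempty_iso_top_fin_two hadj (hconn.preconnected.eq_or_eq_of_neighborSet_eq hvu huv)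

/-- A connected graph whose adjacency matrix has no eigenvalues in `(-1,1)`
and which has a vertex of degree `1` is isomorphic to `K₂`. -/
theorem stmt0 {V : Type*} [Fintype V] [DecidableEq V]
    (H : SimpleGraph V) [DecidableRel H.Adj]
    (hconn : H.Connected)
    (hspec : ∀ μ : ℝ, Module.End.HasEigenvalue (H.adjMatrix ℝ).mulVecLin μ →
      μ ∉ Set.Ioo (-1 : ℝ) 1)
    (hdeg : ∃ v, H.degree v = 1) :
    Nonempty (H ≃g (⊤ : SimpleGraph (Fin 2))) :=
  stmt0_general H hconn hspec hdeg
end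

section
/- Let G and H be connected finite simple graphs on at least one edge each, each with more than 4 vertices. If the line graphs L(G) and L(H) are isomorphic, then G and H are isomorphic. -/
/-- The line graph of a simple graph: vertices are the edges, two being adjacent iff they
are distinct and share an endpoint. -/
def lineGraph {V : Type*} (G : SimpleGraph V) : SimpleGraph G.edgeSet where
  Adj e f := e ≠ f ∧ ∃ v, v ∈ (e : Sym2 V) ∧ v ∈ (f : Sym2 V)
  symm := by
    constructor
    rintro e f ⟨hne, v, hv1, hv2⟩
    exact ⟨hne.symm, v, hv2, hv1⟩
  loopless := by
    constructor
    rintro e ⟨hne, -⟩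
    exact hne rfl

/-!
An isomorphism `φ : L(G) ≃g L(H)` carries the star of a vertex (the edges at it) onto a star.
Three edges at a vertex and the three edges of a triangle both form triangles of the line graph,
and parity tells them apart: an edge outside a triangle of `G` meets none or two of its edges,
while in a connected graph with more than four vertices some edge leaves the four vertices of a
claw and so meets one or three of its edges. Being odd is invariant under `φ`, so stars of vertices
of degree at least two go to stars; a leaf is sent to the far end of the image of its edge. The
resulting vertex maps in both directions are inverse to each other, since in a connected graph
on at least three vertices a vertex is determined by its star, and they preserve adjacency since
`s(u, v)` is the only edge in the stars of both `u` and `v`.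
-/

namespace SimpleGraph

variable {V W : Type*} {G : SimpleGraph V} {H : SimpleGraph W}

theorem Preconnected.exists_adj_mem_notMem [Fintype V] (hG : G.Preconnected) {s : Finset V}
    {u : V} (hu : u ∈ s) (hs : s.card < Fintype.card V) : ∃ a ∈ s, ∃ b ∉ s, G.Adj a b := by
  obtain ⟨x, -, hx⟩ := Finset.exists_mem_notMem_of_card_lt_card (t := Finset.univ) hs
  obtain ⟨p⟩ := hG u x
  obtain ⟨d, -, ha, hb⟩ := p.exists_boundary_dart (s : Set V) hu hx
  exact ⟨d.fst, ha, d.snd, hb, d.adj⟩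

theorem Connected.exists_mem_edgeSet_ne [Fintype V] (hG : G.Connected)
    (hV : 2 < Fintype.card V) {u v : V} (huv : G.Adj u v) :
    ∃ e ∈ G.edgeSet, e ≠ s(u, v) ∧ (u ∈ e ∨ v ∈ e) := by
  classical
  have hcard : ({u, v} : Finset V).card < Fintype.card V := Finset.card_le_two.trans_lt hV
  obtain ⟨a, ha, b, hb, hab⟩ :=
    hG.preconnected.exists_adj_mem_notMem (Finset.mem_insert_self u _) hcard
  simp only [Finset.mem_insert, Finset.mem_singleton, not_or] at ha hb
  refine ⟨s(a, b), hab, ?_, ?_⟩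
  · simp only [ne_eq, Sym2.eq_iff]
    tauto
  · rcases ha with rfl | rfl <;> simp

theorem Connected.eq_of_forall_mem_edgeSet_iff [Fintype V] (hG : G.Connected)
    (hV : 2 < Fintype.card V) {v v' : V} (h : ∀ e ∈ G.edgeSet, v ∈ e ↔ v' ∈ e) : v = v' := by
  have : Nontrivial V := Fintype.one_lt_card_iff_nontrivial.1 (by omega)
  by_contra hne
  obtain ⟨u, hvu⟩ := hG.preconnected.exists_adj_of_nontrivial v
  obtain rfl : v' = u := by
    simpa [Ne.symm hne] using (h _ hvu).1 (Sym2.mem_mk_left v u)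
  obtain ⟨e, he, he_ne, hve⟩ := hG.exists_mem_edgeSet_ne hV hvu
  have hv : v ∈ e := hve.elim id (h e he).2
  exact he_ne ((Sym2.mem_and_mem_iff hne).1 ⟨hv, (h e he).1 hv⟩)

/-- Some vertex `t` is adjacent to an odd number of `x`, `y`, `z`. -/
def IsOddTriple (G : SimpleGraph V) (x y z : V) : Prop :=
  ∃ t, Xor (G.Adj t x) (Xor (G.Adj t y) (G.Adj t z))

theorem IsOddTriple.map (φ : G ≃g H) {x y z : V} (h : G.IsOddTriple x y z) :
    H.IsOddTriple (φ x) (φ y) (φ z) := by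
  obtain ⟨t, ht⟩ := h
  exact ⟨φ t, by simpa only [φ.map_adj_iff] using ht⟩

end SimpleGraph

namespace lineGraph

variable {V W : Type*} {G : SimpleGraph V} {H : SimpleGraph W}

@[simp]
theorem adj_mk_mk {x y u w : V} (h₁ : s(x, y) ∈ G.edgeSet) (h₂ : s(u, w) ∈ G.edgeSet) :
    (lineGraph G).Adj ⟨s(x, y), h₁⟩ ⟨s(u, w), h₂⟩ ↔
      s(x, y) ≠ s(u, w) ∧ (x = u ∨ x = w ∨ y = u ∨ y = w) := by
  simp [lineGraph, or_assoc]

theorem not_isOddTriple_of_triangle {a b c : V} {e₁ e₂ e₃ : G.edgeSet}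
    (h₁ : (e₁ : Sym2 V) = s(a, b)) (h₂ : (e₂ : Sym2 V) = s(a, c)) (h₃ : (e₃ : Sym2 V) = s(b, c)) :
    ¬(lineGraph G).IsOddTriple e₁ e₂ e₃ := by
  obtain ⟨_, hab⟩ := e₁
  obtain ⟨_, hac⟩ := e₂
  obtain ⟨_, hbc⟩ := e₃
  dsimp only at h₁ h₂ h₃
  subst h₁ h₂ h₃
  rintro ⟨⟨t, ht⟩, hodd⟩
  induction t using Sym2.ind with | _ p q => ?_
  simp only [adj_mk_mk, Xor, ne_eq, Sym2.eq_iff] at hodd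
  have hab' := G.ne_of_adj hab
  have hac' := G.ne_of_adj hac
  have hbc' := G.ne_of_adj hbc
  grind

theorem isOddTriple_of_mem [Fintype V] (hG : G.Connected) (hV : 4 < Fintype.card V) {v : V}
    {e₁ e₂ e₃ : G.edgeSet} (h₁₂ : e₁ ≠ e₂) (h₁₃ : e₁ ≠ e₃) (h₂₃ : e₂ ≠ e₃)
    (hv₁ : v ∈ (e₁ : Sym2 V)) (hv₂ : v ∈ (e₂ : Sym2 V)) (hv₃ : v ∈ (e₃ : Sym2 V)) :
    (lineGraph G).IsOddTriple e₁ e₂ e₃ := by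
  classical
  obtain ⟨e₁, he₁⟩ := e₁
  obtain ⟨e₂, he₂⟩ := e₂
  obtain ⟨e₃, he₃⟩ := e₃
  obtain ⟨a, rfl⟩ := Sym2.mem_iff_exists.1 hv₁
  obtain ⟨b, rfl⟩ := Sym2.mem_iff_exists.1 hv₂
  obtain ⟨c, rfl⟩ := Sym2.mem_iff_exists.1 hv₃
  have hcard : ({v, a, b, c} : Finset V).card < Fintype.card V :=
    Finset.card_le_four.trans_lt hV
  obtain ⟨x, hx, y, hy, hxy⟩ :=
    hG.preconnected.exists_adj_mem_notMem (Finset.mem_insert_self v _) hcard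
  refine ⟨⟨s(x, y), G.mem_edgeSet.2 hxy⟩, ?_⟩
  have hva := G.ne_of_adj he₁
  have hvb := G.ne_of_adj he₂
  have hvc := G.ne_of_adj he₃
  have hxy' := hxy.ne
  simp only [Finset.mem_insert, Finset.mem_singleton, not_or] at hx hy
  simp only [ne_eq, Subtype.mk.injEq, Sym2.eq_iff] at h₁₂ h₁₃ h₂₃
  simp only [adj_mk_mk, Xor, ne_eq, Sym2.eq_iff]
  -- the edge `s(x, y)` meets all three edges if `x = v`, and exactly one of them otherwise
  grind

theorem exists_mem_map_of_mem [Fintype V] (hG : G.Connected) (hV : 4 < Fintype.card V)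
    (φ : lineGraph G ≃g lineGraph H) {v : V} {e₁ e₂ e₃ : G.edgeSet} (h₁₂ : e₁ ≠ e₂)
    (h₁₃ : e₁ ≠ e₃) (h₂₃ : e₂ ≠ e₃) (hv₁ : v ∈ (e₁ : Sym2 V)) (hv₂ : v ∈ (e₂ : Sym2 V))
    (hv₃ : v ∈ (e₃ : Sym2 V)) :
    ∃ w, w ∈ (φ e₁ : Sym2 W) ∧ w ∈ (φ e₂ : Sym2 W) ∧ w ∈ (φ e₃ : Sym2 W) := by
  obtain ⟨-, x, hx₁, hx₂⟩ := φ.map_adj_iff.2 (⟨h₁₂, v, hv₁, hv₂⟩ : (lineGraph G).Adj e₁ e₂)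
  obtain ⟨-, y, hy₁, hy₃⟩ := φ.map_adj_iff.2 (⟨h₁₃, v, hv₁, hv₃⟩ : (lineGraph G).Adj e₁ e₃)
  obtain ⟨-, z, hz₂, hz₃⟩ := φ.map_adj_iff.2 (⟨h₂₃, v, hv₂, hv₃⟩ : (lineGraph G).Adj e₂ e₃)
  by_cases hxy : x = y
  · exact ⟨x, hx₁, hx₂, hxy ▸ hy₃⟩
  by_cases hxz : x = z
  · exact ⟨x, hx₁, hx₂, hxz ▸ hz₃⟩
  by_cases hyz : y = z
  · exact ⟨y, hy₁, hyz ▸ hz₂, hy₃⟩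
  exfalso
  exact not_isOddTriple_of_triangle ((Sym2.mem_and_mem_iff hxy).1 ⟨hx₁, hy₁⟩)
    ((Sym2.mem_and_mem_iff hxz).1 ⟨hx₂, hz₂⟩) ((Sym2.mem_and_mem_iff hyz).1 ⟨hy₃, hz₃⟩)
    ((isOddTriple_of_mem hG hV h₁₂ h₁₃ h₂₃ hv₁ hv₂ hv₃).map φ)

theorem mem_map_of_mem [Fintype V] (hG : G.Connected) (hV : 4 < Fintype.card V)
    (φ : lineGraph G ≃g lineGraph H) {v : V} {w : W} {e₁ e₂ e : G.edgeSet} (h₁₂ : e₁ ≠ e₂)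
    (hv₁ : v ∈ (e₁ : Sym2 V)) (hv₂ : v ∈ (e₂ : Sym2 V)) (hw₁ : w ∈ (φ e₁ : Sym2 W))
    (hw₂ : w ∈ (φ e₂ : Sym2 W)) (hv : v ∈ (e : Sym2 V)) : w ∈ (φ e : Sym2 W) := by
  obtain rfl | h₁ := eq_or_ne e₁ e
  · exact hw₁
  obtain rfl | h₂ := eq_or_ne e₂ e
  · exact hw₂
  obtain ⟨w', hw'₁, hw'₂, hw'⟩ := exists_mem_map_of_mem hG hV φ h₁₂ h₁ h₂ hv₁ hv₂ hv
  obtain rfl : w' = w := by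
    by_contra hne
    exact h₁₂ (φ.injective (Subtype.ext (Sym2.eq_of_ne_mem hne hw'₁ hw₁ hw'₂ hw₂)))
  exact hw'

def MapsStar (φ : lineGraph G ≃g lineGraph H) (v : V) (w : W) : Prop :=
  ∀ e : G.edgeSet, v ∈ (e : Sym2 V) ↔ w ∈ (φ e : Sym2 W)

theorem exists_mapsStar_of_ne [Fintype V] [Fintype W] (hG : G.Connected)
    (hV : 4 < Fintype.card V) (hH : H.Connected) (hW : 4 < Fintype.card W)
    (φ : lineGraph G ≃g lineGraph H) {v : V} {e₁ e₂ : G.edgeSet} (h₁₂ : e₁ ≠ e₂)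
    (hv₁ : v ∈ (e₁ : Sym2 V)) (hv₂ : v ∈ (e₂ : Sym2 V)) : ∃ w, MapsStar φ v w := by
  obtain ⟨-, w, hw₁, hw₂⟩ := φ.map_adj_iff.2 (⟨h₁₂, v, hv₁, hv₂⟩ : (lineGraph G).Adj e₁ e₂)
  refine ⟨w, fun e => ⟨mem_map_of_mem hG hV φ h₁₂ hv₁ hv₂ hw₁ hw₂, fun hw => ?_⟩⟩
  simpa using mem_map_of_mem hH hW φ.symm (φ.injective.ne h₁₂) hw₁ hw₂
    (by simpa using hv₁) (by simpa using hv₂) hw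

theorem exists_mapsStar [Fintype V] [Fintype W] (hG : G.Connected)
    (hV : 4 < Fintype.card V) (hH : H.Connected) (hW : 4 < Fintype.card W)
    (φ : lineGraph G ≃g lineGraph H) (v : V) : ∃ w, MapsStar φ v w := by
  have : Nontrivial V := Fintype.one_lt_card_iff_nontrivial.1 (by omega)
  obtain ⟨u, hvu⟩ := hG.preconnected.exists_adj_of_nontrivial v
  set e : G.edgeSet := ⟨s(v, u), hvu⟩
  by_cases hleaf : ∀ e' : G.edgeSet, v ∈ (e' : Sym2 V) → e' = e
  swap
  · push Not at hleaf
    obtain ⟨e', hv', hne⟩ := hleaf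
    exact exists_mapsStar_of_ne hG hV hH hW φ hne hv' (Sym2.mem_mk_left v u)
  -- `v` is a leaf, and its neighbour `u` lies on a second edge `f`
  obtain ⟨f, hf, hfe, hvf | huf⟩ := hG.exists_mem_edgeSet_ne (by omega) hvu
  · exact absurd (congrArg Subtype.val (hleaf ⟨f, hf⟩ hvf)) hfe
  obtain ⟨wu, hwu⟩ := exists_mapsStar_of_ne hG hV hH hW φ (e₁ := e) (e₂ := ⟨f, hf⟩)
    (fun h => hfe (congrArg Subtype.val h).symm) (Sym2.mem_mk_right v u) huf
  obtain ⟨w, hφe⟩ := Sym2.mem_iff_exists.1 ((hwu e).1 (Sym2.mem_mk_right v u))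
  have hne : wu ≠ w := (H.mem_edgeSet.1 (hφe ▸ (φ e).2)).ne
  refine ⟨w, fun e' => ⟨fun hv' => ?_, fun hw' => ?_⟩⟩
  · rw [hleaf e' hv', hφe]
    exact Sym2.mem_mk_right wu w
  by_contra hv'
  have hne' : e' ≠ e := fun h => hv' (h ▸ Sym2.mem_mk_left v u)
  obtain ⟨-, x, hx', hx⟩ := φ.map_adj_iff.1 (⟨φ.injective.ne hne', w, hw',
    hφe ▸ Sym2.mem_mk_right wu w⟩ : (lineGraph H).Adj (φ e') (φ e))
  rcases Sym2.mem_iff.1 hx with rfl | rfl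
  · exact hv' hx'
  · exact hne' (φ.injective (Subtype.ext (Sym2.eq_of_ne_mem hne ((hwu e').1 hx') hw'
      (hφe ▸ Sym2.mem_mk_left wu w) (hφe ▸ Sym2.mem_mk_right wu w))))

theorem MapsStar.adj {φ : lineGraph G ≃g lineGraph H} {a b : V} {a' b' : W}
    (ha : MapsStar φ a a') (hb : MapsStar φ b b') (hne : a' ≠ b') (hab : G.Adj a b) :
    H.Adj a' b' := by
  set e : G.edgeSet := ⟨s(a, b), hab⟩
  have he : (φ e : Sym2 W) = s(a', b') :=
    (Sym2.mem_and_mem_iff hne).1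
      ⟨(ha e).1 (Sym2.mem_mk_left a b), (hb e).1 (Sym2.mem_mk_right a b)⟩
  exact H.mem_edgeSet.1 (he ▸ (φ e).2)

theorem MapsStar.eq_of_symm [Fintype V] (hG : G.Connected) (hV : 2 < Fintype.card V)
    {φ : lineGraph G ≃g lineGraph H} {v v' : V} {w : W} (h : MapsStar φ v w)
    (h' : MapsStar φ.symm w v') : v = v' :=
  hG.eq_of_forall_mem_edgeSet_iff hV fun e he => by
    simpa using (h ⟨e, he⟩).trans (h' (φ ⟨e, he⟩))

end lineGraph

theorem stmt16_general {V W : Type*} [Fintype V] [Fintype W]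
    (G : SimpleGraph V) (H : SimpleGraph W)
    (hGc : G.Connected) (hHc : H.Connected)
    (hGV : 4 < Fintype.card V) (hHV : 4 < Fintype.card W)
    (h : Nonempty (lineGraph G ≃g lineGraph H)) :
    Nonempty (G ≃g H) := by
  obtain ⟨φ⟩ := h
  choose f hf using lineGraph.exists_mapsStar hGc hGV hHc hHV φ
  choose g hg using lineGraph.exists_mapsStar hHc hHV hGc hGV φ.symm
  have hgf : Function.LeftInverse g f := fun v =>
    ((hf v).eq_of_symm hGc (by omega) (hg (f v))).symm
  have hfg : Function.RightInverse g f := fun w =>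
    ((hg w).eq_of_symm hHc (by omega) (hf (g w))).symm
  refine ⟨⟨⟨f, g, hgf, hfg⟩, fun {a b} => ?_⟩⟩
  show H.Adj (f a) (f b) ↔ G.Adj a b
  refine ⟨fun hab => ?_, fun hab => (hf a).adj (hf b) (hgf.injective.ne hab.ne) hab⟩
  simpa only [hgf a, hgf b] using (hg (f a)).adj (hg (f b)) (hfg.injective.ne hab.ne) hab

/-- Whitney: connected graphs with an edge and more than 4 vertices having
isomorphic line graphs are isomorphic. -/
theorem stmt16 {V W : Type*} [Fintype V] [Fintype W]
    (G : SimpleGraph V) (H : SimpleGraph W)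
    (hGc : G.Connected) (hHc : H.Connected)
    (hGe : G.edgeSet.Nonempty) (hHe : H.edgeSet.Nonempty)
    (hGV : 4 < Fintype.card V) (hHV : 4 < Fintype.card W)
    (h : Nonempty (lineGraph G ≃g lineGraph H)) :
    Nonempty (G ≃g H) :=
  stmt16_general G H hGc hHc hGV hHV h
end
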